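/- arXiv:2601.05102 — 7 statements merged into one kernel-verified Lean document; each statement's English description precedes it below -/
import Mathlib

section
/- Robinson fields are Cantor complete. Precisely: let λ be a hyperreal number with λ ≥ 1 and λ > n for every natural number n. Set O = {x ∈ ℝ* : there exists m ∈ ℕ with |x| < λ^m} and I = {x ∈ ℝ* : for every m ∈ ℕ, |x|·λ^m < 1} (so O is an order-convex subring of ℝ* with maximal ideal I, and the Robinson field is the quotient ordered field O/I, where [a] ≤ [b] iff a ≤ b or a − b ∈ I). Then for all sequences x, y : ℕ → ℝ* taking values in O such that for every k ∈ ℕ one has (x k ≤ x (k+1) or x (k+1) − x k ∈ I), (y (k+1) ≤ y k or y k − y (k+1) ∈ I), and (x k ≤ y k or y k − x k ∈ I) — i.e., the closed intervals [x k, y k] form a nested sequence of nonempty closed bounded intervals in O/I — there exists z ∈ O such that for every k ∈ ℕ, (x k ≤ z or z − x k ∈ I) and (z ≤ y k or y k − z ∈ I); i.e., the intersection of these intervals in the Robinson field O/I is nonempty. -/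
open Filter

/-- Countable saturation / Cantor completeness of `ℝ*` itself: every nested sequence of
closed intervals of the hyperreals has nonempty intersection (diagonal argument on
representatives). -/
theorem hyperreal_nested (a b : ℕ → ℝ*) (hab : ∀ i j, i ≤ j → a i ≤ a j ∧ b j ≤ b i ∧ a j ≤ b j) :
    ∃ z : ℝ*, ∀ k, a k ≤ z ∧ z ≤ b k := by
  classical
  set L : Filter ℕ := (hyperfilter ℕ : Filter ℕ) with hL
  let f : ℕ → ℕ → ℝ := fun k => Quotient.out (a k)
  let g : ℕ → ℕ → ℝ := fun k => Quotient.out (b k)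
  have hf : ∀ k, (Germ.ofFun (f k) : ℝ*) = a k := fun k => Quotient.out_eq _
  have hg : ∀ k, (Germ.ofFun (g k) : ℝ*) = b k := fun k => Quotient.out_eq _
  set P : ℕ → ℕ → Prop := fun k n =>
    ∀ i ≤ k, ∀ j ≤ k, i ≤ j → f i n ≤ f j n ∧ g j n ≤ g i n ∧ f j n ≤ g j n with hP
  have hPev : ∀ k, ∀ᶠ n in L, P k n := by
    intro k
    have : ∀ i ∈ Finset.range (k+1), ∀ᶠ n in L, ∀ j ∈ Finset.range (k+1), i ≤ j →
        f i n ≤ f j n ∧ g j n ≤ g i n ∧ f j n ≤ g j n := by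
      intro i _
      rw [Filter.eventually_all_finset]
      intro j _
      rcases le_or_gt i j with hij | hij
      · obtain ⟨h1, h2, h3⟩ := hab i j hij
        rw [← hf i, ← hf j] at h1
        rw [← hg i, ← hg j] at h2
        rw [← hf j, ← hg j] at h3
        filter_upwards [Germ.coe_le.mp h1, Germ.coe_le.mp h2, Germ.coe_le.mp h3] with n n1 n2 n3
        exact fun _ => ⟨n1, n2, n3⟩
      · filter_upwards [] with n h; omega
    rw [← Filter.eventually_all_finset] at this
    filter_upwards [this] with n hn
    intro i hi j hj hij
    exact hn i (Finset.mem_range.mpr (by omega)) j (Finset.mem_range.mpr (by omega)) hij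
  let z : ℕ → ℝ := fun n => f (Nat.findGreatest (fun k => P k n) n) n
  refine ⟨Germ.ofFun z, fun k => ?_⟩
  have hev : ∀ᶠ n in L, f k n ≤ z n ∧ z n ≤ g k n := by
    have hcof : ∀ᶠ n in L, k ≤ n :=
      (Nat.cofinite_eq_atTop ▸ hyperfilter_le_cofinite) (eventually_ge_atTop k)
    filter_upwards [hPev k, hcof] with n hPk hkn
    set c := Nat.findGreatest (fun k => P k n) n with hc
    have hkc : k ≤ c := Nat.le_findGreatest hkn hPk
    have hPc : P c n := Nat.findGreatest_spec (P := fun k => P k n) hkn hPk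
    obtain ⟨h1, h2, h3⟩ := hPc k hkc c le_rfl hkc
    exact ⟨h1, h3.trans h2⟩
  constructor
  · rw [← hf k]; exact Germ.coe_le.mpr (hev.mono fun n h => h.1)
  · rw [← hg k]; exact Germ.coe_le.mpr (hev.mono fun n h => h.2)

/-- Robinson fields are Cantor complete: given a hyperreal `lam ≥ 1` exceeding every natural
number, with `O` the order-convex subring `{x | ∃ m, |x| < lam ^ m}` of the hyperreals and
`I` its maximal ideal `{x | ∀ m, |x| * lam ^ m < 1}`, every nested sequence of nonempty
closed bounded intervals of the Robinson field `O/I` (encoded by representatives `x k`, `y k`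
in `O`, with the quotient order `[a] ≤ [b] ↔ a ≤ b ∨ b - a ∈ I`) has nonempty intersection. -/
theorem robinson_field_cantor_complete
    (lam : ℝ*) (hlam1 : 1 ≤ lam) (hlam : ∀ n : ℕ, (n : ℝ*) < lam)
    (O : Set ℝ*) (hO : O = {x : ℝ* | ∃ m : ℕ, |x| < lam ^ m})
    (I : Set ℝ*) (hI : I = {x : ℝ* | ∀ m : ℕ, |x| * lam ^ m < 1})
    (x y : ℕ → ℝ*)
    (hxO : ∀ k, x k ∈ O) (hyO : ∀ k, y k ∈ O)
    (hx : ∀ k, x k ≤ x (k + 1) ∨ x (k + 1) - x k ∈ I)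
    (hy : ∀ k, y (k + 1) ≤ y k ∨ y k - y (k + 1) ∈ I)
    (hxy : ∀ k, x k ≤ y k ∨ y k - x k ∈ I) :
    ∃ z ∈ O, ∀ k, (x k ≤ z ∨ z - x k ∈ I) ∧ (z ≤ y k ∨ y k - z ∈ I) := by
  have hl2 : (2 : ℝ*) < lam := by have := hlam 2; exact_mod_cast this
  have hl1 : (1 : ℝ*) < lam := by linarith
  have hl0 : (0 : ℝ*) < lam := by linarith
  have hpow : ∀ m : ℕ, (0 : ℝ*) < lam ^ m := fun m => pow_pos hl0 m
  -- I as predicate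
  have hImem : ∀ t : ℝ*, t ∈ I ↔ ∀ m : ℕ, |t| * lam ^ m < 1 := by
    intro t; rw [hI]; rfl
  have Imono : ∀ s t : ℝ*, |s| ≤ |t| → t ∈ I → s ∈ I := by
    intro s t h ht
    rw [hImem] at ht ⊢
    intro m
    exact lt_of_le_of_lt (mul_le_mul_of_nonneg_right h (hpow m).le) (ht m)
  have Ihalf : ∀ t : ℝ*, t ∈ I → ∀ m : ℕ, |t| * lam ^ m < 1 / 2 := by
    intro t ht m
    rw [hImem] at ht
    have h1 : |t| * lam ^ (m + 1) < 1 := ht (m + 1)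
    rw [pow_succ, ← mul_assoc] at h1
    nlinarith [abs_nonneg t, hpow m, mul_nonneg (abs_nonneg t) (hpow m).le]
  have Iadd : ∀ s t : ℝ*, s ∈ I → t ∈ I → s + t ∈ I := by
    intro s t hs ht
    rw [hImem]
    intro m
    have h1 := Ihalf s hs m
    have h2 := Ihalf t ht m
    have h3 : |s + t| * lam ^ m ≤ |s| * lam ^ m + |t| * lam ^ m := by
      rw [← add_mul]
      exact mul_le_mul_of_nonneg_right (abs_add_le s t) (hpow m).le
    linarith
  -- quasi-order
  set R : ℝ* → ℝ* → Prop := fun a b => a ≤ b ∨ b - a ∈ I with hR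
  have Rtrans : ∀ a b c : ℝ*, R a b → R b c → R a c := by
    intro a b c hab hbc
    rcases le_or_gt a c with h | h
    · exact Or.inl h
    rcases hab with hab | hab <;> rcases hbc with hbc | hbc
    · exact absurd (hab.trans hbc) h.not_ge
    · refine Or.inr (Imono _ _ ?_ hbc)
      rw [abs_of_neg (by linarith), abs_of_neg (by linarith)]
      linarith
    · refine Or.inr (Imono _ _ ?_ hab)
      have hba : b - a ∈ I := hab
      rw [abs_of_neg (by linarith)]
      rcases le_or_gt (b - a) 0 with h2 | h2
      · rw [abs_of_nonpos h2]; linarith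
      · rw [abs_of_pos h2]; linarith
    · refine Or.inr ?_
      have := Iadd _ _ hbc hab
      have heq : (c - b) + (b - a) = c - a := by ring
      rwa [heq] at this
  have Rx : ∀ i j, i ≤ j → R (x i) (x j) := by
    intro i j h
    induction j, h using Nat.le_induction with
    | base => exact Or.inl le_rfl
    | succ n hn ih => exact Rtrans _ _ _ ih (hx n)
  have Ry : ∀ i j, i ≤ j → R (y j) (y i) := by
    intro i j h
    induction j, h using Nat.le_induction with
    | base => exact Or.inl le_rfl
    | succ n hn ih => exact Rtrans _ _ _ (hy n) ih
  have Rxy : ∀ i j, R (x i) (y j) := by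
    intro i j
    exact Rtrans _ _ _ (Rx i (max i j) (le_max_left _ _))
      (Rtrans _ _ _ (hxy (max i j)) (Ry j (max i j) (le_max_right _ _)))
  -- running max / min
  set X : ℕ → ℝ* := fun k => Nat.rec (x 0) (fun n Xn => max Xn (x (n + 1))) k with hXdef
  set Y : ℕ → ℝ* := fun k => Nat.rec (y 0) (fun n Yn => min Yn (y (n + 1))) k with hYdef
  have hXs : ∀ k, X (k + 1) = max (X k) (x (k + 1)) := fun k => rfl
  have hYs : ∀ k, Y (k + 1) = min (Y k) (y (k + 1)) := fun k => rfl
  have hXmono : Monotone X := monotone_nat_of_le_succ fun k => by rw [hXs]; exact le_max_left _ _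
  have hYanti : Antitone Y := antitone_nat_of_succ_le fun k => by rw [hYs]; exact min_le_left _ _
  have hxX : ∀ i k, i ≤ k → x i ≤ X k := by
    intro i k h
    induction k with
    | zero => rw [Nat.le_zero] at h; subst h; exact le_rfl
    | succ n ih =>
      rw [hXs]
      rcases (by omega : i ≤ n ∨ i = n + 1) with h2 | h2
      · exact (ih h2).trans (le_max_left _ _)
      · subst h2; exact le_max_right _ _
  have hYy : ∀ i k, i ≤ k → Y k ≤ y i := by
    intro i k h
    induction k with
    | zero => rw [Nat.le_zero] at h; subst h; exact le_rfl
    | succ n ih =>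
      rw [hYs]
      rcases (by omega : i ≤ n ∨ i = n + 1) with h2 | h2
      · exact (min_le_left _ _).trans (ih h2)
      · subst h2; exact min_le_right _ _
  have RXy : ∀ k j, R (X k) (y j) := by
    intro k j
    induction k with
    | zero => exact Rxy 0 j
    | succ n ih =>
      rw [hXs]
      rcases max_choice (X n) (x (n + 1)) with h | h <;> rw [h]
      · exact ih
      · exact Rxy (n + 1) j
  have RXY : ∀ k, R (X k) (Y k) := by
    intro k
    have : ∀ K, R (X k) (Y K) := by
      intro K
      induction K with
      | zero => exact RXy k 0
      | succ n ih =>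
        rw [hYs]
        rcases min_choice (Y n) (y (n + 1)) with h | h <;> rw [h]
        · exact ih
        · exact RXy k (n + 1)
    exact this k
  -- the nested intervals in ℝ*
  set a : ℕ → ℝ* := fun k => X k - (lam ^ k)⁻¹ with ha
  set b : ℕ → ℝ* := fun k => Y k + (lam ^ k)⁻¹ with hb
  have hinv : ∀ i j : ℕ, i ≤ j → (lam ^ j)⁻¹ ≤ (lam ^ i)⁻¹ := fun i j h =>
    inv_anti₀ (hpow i) (pow_le_pow_right₀ hlam1 h)
  have hab : ∀ i j, i ≤ j → a i ≤ a j ∧ b j ≤ b i ∧ a j ≤ b j := by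
    intro i j h
    refine ⟨?_, ?_, ?_⟩
    · have := hXmono h; have := hinv i j h; simp only [ha]; linarith
    · have := hYanti h; have := hinv i j h; simp only [hb]; linarith
    · simp only [ha, hb]
      have hinvpos : (0 : ℝ*) < (lam ^ j)⁻¹ := inv_pos.mpr (hpow j)
      rcases RXY j with h2 | h2
      · linarith
      · rw [hImem] at h2
        have h3 : |Y j - X j| < (lam ^ j)⁻¹ := by
          rw [inv_eq_one_div, lt_div_iff₀ (hpow j)]
          exact h2 j
        have h4 : X j - Y j ≤ |Y j - X j| := by
          rw [abs_sub_comm]; exact le_abs_self _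
        linarith
  obtain ⟨z, hz⟩ := hyperreal_nested a b hab
  refine ⟨z, ?_, ?_⟩
  · -- z ∈ O
    rw [hO]
    obtain ⟨mx, hmx⟩ := hO ▸ hxO 0
    obtain ⟨my, hmy⟩ := hO ▸ hyO 0
    set N := max mx my with hN
    refine ⟨N + 1, ?_⟩
    have h1 : a 0 ≤ z := (hz 0).1
    have h2 : z ≤ b 0 := (hz 0).2
    have ha0 : a 0 = x 0 - 1 := by simp [ha, show X 0 = x 0 from rfl]
    have hb0 : b 0 = y 0 + 1 := by simp [hb, show Y 0 = y 0 from rfl]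
    have hx0 : |x 0| < lam ^ N := lt_of_lt_of_le hmx (pow_le_pow_right₀ hlam1 (le_max_left _ _))
    have hy0 : |y 0| < lam ^ N := lt_of_lt_of_le hmy (pow_le_pow_right₀ hlam1 (le_max_right _ _))
    have hNpos := hpow N
    have hN1 : (1 : ℝ*) ≤ lam ^ N := one_le_pow₀ hlam1
    rw [abs_lt]
    constructor
    · have : -(x 0) ≤ |x 0| := neg_le_abs _
      rw [pow_succ]
      nlinarith
    · have : y 0 ≤ |y 0| := le_abs_self _
      rw [pow_succ]
      nlinarith
  · intro k
    constructor
    · -- x k ≤ z ∨ z - x k ∈ I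
      rcases le_or_gt (x k) z with h | h
      · exact Or.inl h
      refine Or.inr ?_
      rw [hImem]
      intro m
      set K := max k (m + 1) with hK
      have h1 : a K ≤ z := (hz K).1
      have h2 : x k ≤ X K := hxX k K (le_max_left _ _)
      have h3 : x k - z ≤ (lam ^ K)⁻¹ := by simp only [ha] at h1; linarith
      have habs : |z - x k| = x k - z := by
        rw [abs_sub_comm, abs_of_pos (by linarith)]
      rw [habs]
      have h4 : (lam ^ K)⁻¹ * lam ^ m < 1 := by
        rw [inv_mul_lt_iff₀ (hpow K), mul_one]
        exact pow_lt_pow_right₀ hl1 (by omega)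
      calc (x k - z) * lam ^ m ≤ (lam ^ K)⁻¹ * lam ^ m :=
            mul_le_mul_of_nonneg_right h3 (hpow m).le
        _ < 1 := h4
    · rcases le_or_gt z (y k) with h | h
      · exact Or.inl h
      refine Or.inr ?_
      rw [hImem]
      intro m
      set K := max k (m + 1) with hK
      have h1 : z ≤ b K := (hz K).2
      have h2 : Y K ≤ y k := hYy k K (le_max_left _ _)
      have h3 : z - y k ≤ (lam ^ K)⁻¹ := by simp only [hb] at h1; linarith
      have habs : |y k - z| = z - y k := by
        rw [abs_sub_comm, abs_of_pos (by linarith)]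
      rw [habs]
      have h4 : (lam ^ K)⁻¹ * lam ^ m < 1 := by
        rw [inv_mul_lt_iff₀ (hpow K), mul_one]
        exact pow_lt_pow_right₀ hl1 (by omega)
      calc (z - y k) * lam ^ m ≤ (lam ^ K)⁻¹ * lam ^ m :=
            mul_le_mul_of_nonneg_right h3 (hpow m).le
        _ < 1 := h4
end

section
/- The hyperreal field satisfies the nested-interval (Cantor completeness) property: for all sequences x, y : ℕ → ℝ* such that x k ≤ x (k+1) ≤ y (k+1) ≤ y k for every k ∈ ℕ, there exists z ∈ ℝ* with x k ≤ z ≤ y k for every k ∈ ℕ. -/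
open Filter

/-- The hyperreal field satisfies the nested-interval (Cantor completeness) property. -/
theorem hyperreal_nested_intervals
    (x y : ℕ → ℝ*)
    (h : ∀ k, x k ≤ x (k + 1) ∧ x (k + 1) ≤ y (k + 1) ∧ y (k + 1) ≤ y k) :
    ∃ z : ℝ*, ∀ k, x k ≤ z ∧ z ≤ y k := by
  classical
  choose f hf using fun k => Hyperreal.ofSeq_surjective (x k)
  choose g hg using fun k => Hyperreal.ofSeq_surjective (y k)
  have mono_x : Monotone x := monotone_nat_of_le_succ fun k => (h k).1
  have anti_y : Antitone y := antitone_nat_of_succ_le fun k => (h k).2.2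
  have hxy : ∀ k, x k ≤ y k := fun k =>
    ((h k).1.trans (h k).2.1).trans (h k).2.2
  -- translate to eventual statements
  have key : ∀ i j, i ≤ j →
      ∀ᶠ n in hyperfilter ℕ, f i n ≤ f j n ∧ f j n ≤ g j n ∧ g j n ≤ g i n := by
    intro i j hij
    have h1 : x i ≤ x j := mono_x hij
    have h2 : x j ≤ y j := hxy j
    have h3 : y j ≤ y i := anti_y hij
    rw [← hf i, ← hf j] at h1
    rw [← hf j, ← hg j] at h2
    rw [← hg i, ← hg j] at h3
    exact (Filter.Germ.coe_le.1 h1).and ((Filter.Germ.coe_le.1 h2).and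
      (Filter.Germ.coe_le.1 h3))
  set P : ℕ → ℕ → Prop := fun k n =>
    ∀ i ≤ k, ∀ j ≤ k, i ≤ j → f i n ≤ f j n ∧ f j n ≤ g j n ∧ g j n ≤ g i n with hP
  have hD : ∀ k, ∀ᶠ n in hyperfilter ℕ, P k n := by
    intro k
    have H : ∀ᶠ n in hyperfilter ℕ, ∀ i ∈ Finset.range (k+1), ∀ j ∈ Finset.range (k+1),
        i ≤ j → f i n ≤ f j n ∧ f j n ≤ g j n ∧ g j n ≤ g i n := by
      rw [eventually_all_finset]
      intro i _
      rw [eventually_all_finset]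
      intro j _
      rw [eventually_all]
      exact key i j
    exact H.mono fun n hn i hi j hj hij =>
      hn i (Finset.mem_range_succ_iff.2 hi) j (Finset.mem_range_succ_iff.2 hj) hij
  set μ : ℕ → ℕ := fun n => Nat.findGreatest (fun k => P k n) n with hμ
  refine ⟨Hyperreal.ofSeq fun n => f (μ n) n, fun k => ?_⟩
  have hbig : ∀ᶠ n in hyperfilter ℕ, P k n ∧ k ≤ n := by
    refine (hD k).and ?_
    exact Nat.hyperfilter_le_atTop (eventually_ge_atTop k)
  have main : ∀ᶠ n in hyperfilter ℕ,
      f k n ≤ f (μ n) n ∧ f (μ n) n ≤ g k n := by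
    filter_upwards [hbig] with n ⟨hPk, hkn⟩
    have hle : k ≤ μ n := Nat.le_findGreatest (P := fun k => P k n) hkn hPk
    have hPμ : P (μ n) n := Nat.findGreatest_spec (P := fun k => P k n) hkn hPk
    obtain ⟨a, b, c⟩ := hPμ k hle (μ n) le_rfl hle
    exact ⟨a, b.trans c⟩
  constructor
  · rw [← hf k]
    exact Filter.Germ.coe_le.2 (main.mono fun n hn => hn.1)
  · rw [← hg k]
    exact Filter.Germ.coe_le.2 (main.mono fun n hn => hn.2)
end

section
/- Let F be a linearly ordered field which is Cantor complete, i.e., for all sequences (aₖ), (bₖ) in F with aₖ ≤ aₖ₊₁ ≤ bₖ₊₁ ≤ bₖ for all k there exists z ∈ F with aₖ ≤ z ≤ bₖ for all k. Let C : ℕ → Set F be a sequence of subsets of F such that each C k is nonempty, C (k+1) ⊆ C k for all k, and each C k is a finite union of closed bounded intervals (for each k there is a finite family of pairs (a, b) ∈ F × F with C k equal to the union of the corresponding intervals [a, b]). Then the intersection ⋂ₖ C k is nonempty. -/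
/-- Over a Cantor complete linearly ordered field, a nested sequence of nonempty sets,
each a finite union of closed bounded intervals, has nonempty intersection. -/
theorem nested_finite_unions_of_intervals_nonempty_inter
    {F : Type*} [Field F] [LinearOrder F] [IsStrictOrderedRing F]
    (hCC : ∀ a b : ℕ → F,
      (∀ k, a k ≤ a (k + 1) ∧ a (k + 1) ≤ b (k + 1) ∧ b (k + 1) ≤ b k) →
      ∃ z : F, ∀ k, a k ≤ z ∧ z ≤ b k)
    (C : ℕ → Set F)
    (hne : ∀ k, (C k).Nonempty)
    (hnested : ∀ k, C (k + 1) ⊆ C k)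
    (hsa : ∀ k, ∃ s : Finset (F × F), C k = ⋃ p ∈ s, Set.Icc p.1 p.2) :
    (⋂ k, C k).Nonempty := by
  classical
  have hanti : Antitone C := antitone_nat_of_succ_le hnested
  -- Key pigeonhole lemma: if every C m meets a finite union of intervals, then some
  -- single interval in the union meets every C m.
  have key : ∀ (s : Finset (F × F)),
      (∀ m, (C m ∩ ⋃ p ∈ s, Set.Icc p.1 p.2).Nonempty) →
      ∃ p ∈ s, ∀ m, (C m ∩ Set.Icc p.1 p.2).Nonempty := by
    intro s hs
    by_contra h
    push_neg at h
    have h' : ∀ p : s, ∃ m, ¬(C m ∩ Set.Icc (p : F × F).1 (p : F × F).2).Nonempty := by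
      intro p
      obtain ⟨m, hm⟩ := h p p.2
      exact ⟨m, by simpa [Set.not_nonempty_iff_eq_empty] using hm⟩
    choose g hg using h'
    set M := Finset.univ.sup g with hM
    obtain ⟨x, hx1, hx2⟩ := hs M
    rw [Set.mem_iUnion₂] at hx2
    obtain ⟨p, hp, hxp⟩ := hx2
    exact hg ⟨p, hp⟩ ⟨x, hanti (Finset.le_sup (Finset.mem_univ ⟨p, hp⟩)) hx1, hxp⟩
  -- Invariant
  set P : ℕ → F × F → Prop := fun k q =>
    Set.Icc q.1 q.2 ⊆ C k ∧ ∀ m, (C m ∩ Set.Icc q.1 q.2).Nonempty with hP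
  -- Base case
  have base : ∃ q : F × F, P 0 q := by
    obtain ⟨s, hs⟩ := hsa 0
    have hm : ∀ m, (C m ∩ ⋃ p ∈ s, Set.Icc p.1 p.2).Nonempty := by
      intro m
      obtain ⟨x, hx⟩ := hne m
      exact ⟨x, hx, hs ▸ hanti (Nat.zero_le m) hx⟩
    obtain ⟨p, hp, hpall⟩ := key s hm
    refine ⟨p, ?_, hpall⟩
    intro t ht
    exact hs ▸ Set.mem_biUnion hp ht
  -- Step
  have step : ∀ (k : ℕ) (q : F × F), P k q →
      ∃ q' : F × F, P (k + 1) q' ∧ Set.Icc q'.1 q'.2 ⊆ Set.Icc q.1 q.2 := by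
    intro k q hq
    obtain ⟨s, hs⟩ := hsa (k + 1)
    set s' : Finset (F × F) := s.image (fun p => (max p.1 q.1, min p.2 q.2)) with hs'
    have hS : C (k + 1) ∩ Set.Icc q.1 q.2 = ⋃ p ∈ s', Set.Icc p.1 p.2 := by
      rw [hs]
      ext t
      simp only [Set.mem_inter_iff, Set.mem_iUnion₂, Set.mem_Icc, hs', Finset.mem_image]
      constructor
      · rintro ⟨⟨p, hp, ht1, ht2⟩, ht3, ht4⟩
        exact ⟨(max p.1 q.1, min p.2 q.2), ⟨p, hp, rfl⟩, max_le ht1 ht3, le_min ht2 ht4⟩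
      · rintro ⟨r, ⟨p, hp, rfl⟩, ht1, ht2⟩
        simp only [max_le_iff, le_min_iff] at ht1 ht2
        exact ⟨⟨p, hp, ht1.1, ht2.1⟩, ht1.2, ht2.2⟩
    have hm : ∀ m, (C m ∩ ⋃ p ∈ s', Set.Icc p.1 p.2).Nonempty := by
      intro m
      obtain ⟨t, ht1, ht2⟩ := hq.2 (max m (k + 1))
      refine ⟨t, hanti (le_max_left _ _) ht1, ?_⟩
      rw [← hS]
      exact ⟨hanti (le_max_right _ _) ht1, ht2⟩
    obtain ⟨p, hp, hpall⟩ := key s' hm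
    have hsub : Set.Icc p.1 p.2 ⊆ C (k + 1) ∩ Set.Icc q.1 q.2 := by
      rw [hS]; exact fun t ht => Set.mem_biUnion hp ht
    exact ⟨p, ⟨fun t ht => (hsub ht).1, hpall⟩, fun t ht => (hsub ht).2⟩
  choose f hf1 hf2 using step
  obtain ⟨q0, hq0⟩ := base
  -- Build the sequence by recursion
  let g : ∀ k : ℕ, {q : F × F // P k q} := fun k =>
    Nat.rec ⟨q0, hq0⟩ (fun k ih => ⟨f k ih.1 ih.2, hf1 k ih.1 ih.2⟩) k
  have hglink : ∀ k, Set.Icc (g (k + 1)).1.1 (g (k + 1)).1.2 ⊆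
      Set.Icc (g k).1.1 (g k).1.2 := fun k => hf2 k (g k).1 (g k).2
  set a : ℕ → F := fun k => (g k).1.1 with ha
  set b : ℕ → F := fun k => (g k).1.2 with hb
  have hab : ∀ k, a k ≤ b k := by
    intro k
    obtain ⟨t, _, ht⟩ := (g k).2.2 0
    exact le_trans ht.1 ht.2
  have hmono : ∀ k, a k ≤ a (k + 1) ∧ a (k + 1) ≤ b (k + 1) ∧ b (k + 1) ≤ b k := by
    intro k
    have h1 := hglink k ⟨le_refl (a (k + 1)), hab (k + 1)⟩
    have h2 := hglink k ⟨hab (k + 1), le_refl (b (k + 1))⟩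
    exact ⟨h1.1, hab (k + 1), h2.2⟩
  obtain ⟨z, hz⟩ := hCC a b hmono
  exact ⟨z, Set.mem_iInter.mpr fun k => (g k).2.1 ⟨(hz k).1, (hz k).2⟩⟩
end

section
/- Let F be a linearly ordered field which is non-Archimedean (there exists x ∈ F with x > n for every natural number n) and in which every nonnegative element is a square. Then there exists a 2×2 matrix M over F with determinant 1 such that: (i) M has no eigenvalue in F, i.e., there is no λ ∈ F and nonzero v ∈ F² with M·v = λ·v (equivalently, the induced projective transformation of P¹(F) has no fixed point); and (ii) the Möbius orbit of 0 under M is well-defined, strictly increasing, and infinitesimal: the sequence a : ℕ → F defined by a 0 = 0 and a (n+1) = (M₀₀·(a n) + M₀₁)/(M₁₀·(a n) + M₁₁) satisfies M₁₀·(a n) + M₁₁ > 0, a n < a (n+1), and a n is infinitesimal for every n. (Thus over a non-Archimedean real closed field there are Θ-positively rotating elements of PSL₂(F) with no fixed point in P¹(F).) -/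
/-- Möbius orbit of `0` under the matrix `!![s, e; -e, s]`. -/
def mobiusOrbitAux {F : Type*} [Field F] [LinearOrder F] [IsStrictOrderedRing F] (s e : F) : ℕ → F
  | 0 => 0
  | n + 1 => (s * mobiusOrbitAux s e n + e) / (-e * mobiusOrbitAux s e n + s)

private lemma mobius_step_bound {F : Type*} [Field F] [LinearOrder F] [IsStrictOrderedRing F]
    (t an nn : F) (ht0 : 0 < t) (ht1 : t < 1)
    (hn : 0 ≤ nn) (h1 : 0 ≤ an) (h2 : an ≤ 2*nn*t)
    (h4' : 4*nn*(nn+1)*t < 1) (hd : 0 < 1 - t*an) :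
    an + t ≤ 2*(nn+1)*t*(1 - t*an) := by
  nlinarith [mul_nonneg ht0.le h1, mul_nonneg ht0.le ht0.le,
    mul_le_mul_of_nonneg_left h2 (mul_nonneg ht0.le ht0.le)]

private lemma mobius_half_bound {F : Type*} [Field F] [LinearOrder F] [IsStrictOrderedRing F]
    (t an nn : F) (ht0 : 0 < t) (ht1 : t < 1)
    (h1 : 0 ≤ an) (h2 : an ≤ 2*nn*t) (h4 : 4*nn*t < 1) :
    t * an < 1/2 := by
  nlinarith

private lemma mobius_mono {F : Type*} [Field F] [LinearOrder F] [IsStrictOrderedRing F]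
    (t an : F) (ht0 : 0 < t) (hd : 0 < 1 - t * an) :
    an * (1 - t * an) < an + t := by
  nlinarith [sq_nonneg an]

set_option maxHeartbeats 1600000 in
/-- Over a non-Archimedean linearly ordered field in which every nonnegative element is a
square, there is a determinant-one 2×2 matrix with no eigenvalue in the field whose Möbius
orbit of `0` is well-defined, strictly increasing, and consists of infinitesimals. -/
theorem exists_positively_rotating_without_fixed_point
    {F : Type*} [Field F] [LinearOrder F] [IsStrictOrderedRing F]
    (hna : ∃ x : F, ∀ n : ℕ, (n : F) < x)
    (hsq : ∀ x : F, 0 ≤ x → ∃ y : F, y ^ 2 = x) :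
    ∃ M : Matrix (Fin 2) (Fin 2) F,
      M.det = 1 ∧
      (¬ ∃ (lam : F) (v : Fin 2 → F), v ≠ 0 ∧ M.mulVec v = lam • v) ∧
      ∃ a : ℕ → F, a 0 = 0 ∧
        (∀ n, a (n + 1) = (M 0 0 * a n + M 0 1) / (M 1 0 * a n + M 1 1)) ∧
        (∀ n, 0 < M 1 0 * a n + M 1 1) ∧
        (∀ n, a n < a (n + 1)) ∧
        (∀ n, ∀ m : ℕ, (m : F) * |a n| < 1) := by
  obtain ⟨x, hx⟩ := hna
  have hx0 : (0:F) < x := lt_trans (by norm_num : (0:F) < 1) (by exact_mod_cast hx 1)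
  obtain ⟨ε, hε0, hεinf⟩ : ∃ e : F, 0 < e ∧ ∀ m : ℕ, (m:F) * e < 1 := by
    refine ⟨x⁻¹, inv_pos.mpr hx0, fun m => ?_⟩
    rw [← div_eq_mul_inv, div_lt_one hx0]
    exact hx m
  have hε1 : ε < 1 := by simpa using hεinf 1
  have h2ε : (2:F) * ε < 1 := by have := hεinf 2; push_cast at this; exact this
  have h1ε2 : 0 < 1 - ε ^ 2 := by nlinarith
  obtain ⟨s, hs0, hs2⟩ : ∃ s : F, 0 < s ∧ s ^ 2 = 1 - ε ^ 2 := by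
    obtain ⟨y, hy⟩ := hsq (1 - ε ^ 2) h1ε2.le
    refine ⟨|y|, ?_, by rw [sq_abs, hy]⟩
    rcases (abs_nonneg y).lt_or_eq with h | h
    · exact h
    · exfalso
      have hy0 : y = 0 := abs_eq_zero.mp h.symm
      rw [hy0] at hy
      nlinarith
  have hshalf : (1:F)/2 < s := by nlinarith
  obtain ⟨t, ht0, htinf, hεst⟩ :
      ∃ t : F, 0 < t ∧ (∀ m : ℕ, (m:F) * t < 1) ∧ ε = s * t := by
    refine ⟨ε / s, div_pos hε0 hs0, fun m => ?_, by field_simp⟩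
    have h2m : ((2*m : ℕ):F) * ε < 1 := hεinf (2*m)
    push_cast at h2m
    have hm0 : (0:F) ≤ (m:F) := Nat.cast_nonneg m
    rw [mul_div_assoc', div_lt_one hs0]
    nlinarith
  have ht1 : t < 1 := by simpa using htinf 1
  set a : ℕ → F := mobiusOrbitAux s ε with ha
  have ha0 : a 0 = 0 := rfl
  have haS : ∀ n, a (n+1) = (s * a n + ε)/(-ε * a n + s) := fun n => rfl
  have hkey : ∀ n : ℕ, 0 ≤ a n ∧ a n ≤ 2*(n:F)*t := by
    intro n
    induction n with
    | zero => simp [ha0]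
    | succ n ih =>
      obtain ⟨h1, h2⟩ := ih
      have h4 : 4*(n:F)*t < 1 := by
        have := htinf (4*n); push_cast at this; linarith
      have hta : t * a n < 1/2 := mobius_half_bound t (a n) n ht0 ht1 h1 h2 h4
      have hd : 0 < 1 - t * a n := by linarith
      have hden : (0:F) < -ε * a n + s := by rw [hεst]; nlinarith
      have hform : a (n+1) = (a n + t)/(1 - t * a n) := by
        rw [haS n, div_eq_div_iff hden.ne' hd.ne', hεst]; ring
      constructor
      · rw [hform]
        exact div_nonneg (by linarith) hd.le
      · rw [hform, div_le_iff₀ hd]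
        have h4' : 4*(n:F)*((n:F)+1)*t < 1 := by
          have := htinf (4*n*(n+1)); push_cast at this; linarith
        have := mobius_step_bound t (a n) n ht0 ht1 (Nat.cast_nonneg n) h1 h2 h4' hd
        push_cast
        linarith
  have hta : ∀ n, t * a n < 1/2 := by
    intro n
    obtain ⟨h1, h2⟩ := hkey n
    have h4 : 4*(n:F)*t < 1 := by
      have := htinf (4*n); push_cast at this; linarith
    exact mobius_half_bound t (a n) n ht0 ht1 h1 h2 h4
  have hden : ∀ n, (0:F) < -ε * a n + s := by
    intro n
    have := hta n
    rw [hεst]; nlinarith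
  have hform : ∀ n, a (n+1) = (a n + t)/(1 - t * a n) := by
    intro n
    have hd : 0 < 1 - t * a n := by linarith [hta n]
    rw [haS n, div_eq_div_iff (hden n).ne' hd.ne', hεst]; ring
  refine ⟨!![s, ε; -ε, s], ?_, ?_, a, ha0, ?_, ?_, ?_, ?_⟩
  · rw [Matrix.det_fin_two_of]; nlinarith
  · rintro ⟨lam, v, hv, hMv⟩
    have h0 : ((!![s, ε; -ε, s] : Matrix (Fin 2) (Fin 2) F) - lam • 1).mulVec v = 0 := by
      rw [Matrix.sub_mulVec, hMv, Matrix.smul_mulVec, Matrix.one_mulVec, sub_self]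
    have hdet : ((!![s, ε; -ε, s] : Matrix (Fin 2) (Fin 2) F) - lam • 1).det = 0 := by
      rw [← Matrix.exists_mulVec_eq_zero_iff]
      exact ⟨v, hv, h0⟩
    rw [Matrix.det_fin_two] at hdet
    simp [Matrix.sub_apply, Matrix.smul_apply, Matrix.one_apply] at hdet
    nlinarith [sq_nonneg (s - lam), hε0, hdet]
  · intro n
    simpa using haS n
  · intro n
    simpa using hden n
  · intro n
    have hd : 0 < 1 - t * a n := by linarith [hta n]
    obtain ⟨h1, _⟩ := hkey n
    rw [hform n, lt_div_iff₀ hd]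
    exact mobius_mono t (a n) ht0 hd
  · intro n m
    obtain ⟨h1, h2⟩ := hkey n
    rw [abs_of_nonneg h1]
    have h2mn : ((2*m*n:ℕ):F) * t < 1 := htinf (2*m*n)
    push_cast at h2mn
    have hm0 : (0:F) ≤ (m:F) := Nat.cast_nonneg m
    calc (m:F) * a n ≤ (m:F) * (2*(n:F)*t) := mul_le_mul_of_nonneg_left h2 hm0
      _ = 2*(m:F)*(n:F)*t := by ring
      _ < 1 := h2mn
end

section
/- Let F be a linearly ordered field and ε, s, a ∈ F with 0 < ε, 0 < s, s² = 1 − ε², 0 ≤ a, and suppose both ε and a are infinitesimal (n·ε < 1 and n·a < 1 for every natural number n). Then s − ε·a > 0, and the element b := (s·a + ε)/(s − ε·a) satisfies a < b, 0 < b, and b is infinitesimal. -/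
/-- The Möbius map `a ↦ (s·a + ε)/(s − ε·a)` with `s² = 1 − ε²`, `ε` a positive
infinitesimal, strictly increases nonnegative infinitesimals and lands in the positive
infinitesimals. -/
theorem mobius_increases_infinitesimal
    {F : Type*} [Field F] [LinearOrder F] [IsStrictOrderedRing F]
    (ε s a : F) (hε : 0 < ε) (hs : 0 < s) (hs2 : s ^ 2 = 1 - ε ^ 2)
    (ha : 0 ≤ a)
    (hεinf : ∀ n : ℕ, (n : F) * ε < 1)
    (hainf : ∀ n : ℕ, (n : F) * a < 1) :
    0 < s - ε * a ∧
      a < (s * a + ε) / (s - ε * a) ∧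
      0 < (s * a + ε) / (s - ε * a) ∧
      ∀ n : ℕ, (n : F) * |(s * a + ε) / (s - ε * a)| < 1 := by
  have he2 : (2 : F) * ε < 1 := by have := hεinf 2; push_cast at this; linarith
  have ha1 : a < 1 := by have := hainf 1; push_cast at this; linarith
  have hs1 : s < 1 := by nlinarith
  have hshalf : (1 : F) / 2 < s := by nlinarith
  have hden : 0 < s - ε * a := by nlinarith
  have hab : a < (s * a + ε) / (s - ε * a) := by
    rw [lt_div_iff₀ hden]; nlinarith [mul_nonneg (mul_nonneg hε.le ha) ha]
  have hb : 0 < (s * a + ε) / (s - ε * a) := lt_of_le_of_lt ha hab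
  refine ⟨hden, hab, hb, fun n => ?_⟩
  rw [abs_of_pos hb]
  have h8a := hainf (8 * n)
  have h8e := hεinf (8 * n)
  push_cast at h8a h8e
  rw [← mul_div_assoc, div_lt_one hden]
  have hn : (0 : F) ≤ (n : F) := Nat.cast_nonneg n
  nlinarith [mul_nonneg hn ha, mul_nonneg hn hε.le, mul_nonneg (mul_nonneg hn ha) (sub_nonneg.2 hs1.le)]
end

section
/- Let F be a linearly ordered field and ε ∈ F with 0 < ε and ε infinitesimal (n·ε < 1 for every natural number n). Set t := 1 − 2ε and let B := {z ∈ F : z − 1 is infinitesimal} be the infinitesimal ball about 1. Then for every z ∈ B one has 2t − z > 0 and 1/(2t − z) ∈ B, and also z ≠ 0 and 2t − 1/z ∈ B. In particular, the Möbius transformation h(z) = 1/(2t − z) of P¹(F) (induced by the matrix (0, 1; −1, 2t) of determinant 1 and trace 2t) and its inverse both map B into itself, so the full ℤ-orbit of t under h stays infinitesimally close to 1. -/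
set_option maxHeartbeats 1000000 in
/-- For a positive infinitesimal `ε`, setting `t = 1 − 2ε`, the Möbius map
`z ↦ 1/(2t − z)` and its inverse `z ↦ 2t − 1/z` both preserve the infinitesimal ball
about `1`. -/
theorem infinitesimal_ball_invariant_under_infinitesimal_rotation
    {F : Type*} [Field F] [LinearOrder F] [IsStrictOrderedRing F]
    (ε : F) (hε : 0 < ε) (hεinf : ∀ n : ℕ, (n : F) * ε < 1)
    (t : F) (ht : t = 1 - 2 * ε)
    (B : Set F) (hB : B = {z : F | ∀ n : ℕ, (n : F) * |z - 1| < 1}) :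
    ∀ z ∈ B, (0 < 2 * t - z ∧ 1 / (2 * t - z) ∈ B) ∧
      (z ≠ 0 ∧ 2 * t - 1 / z ∈ B) := by
  subst hB
  intro z hz
  simp only [Set.mem_setOf_eq] at hz ⊢
  have hε16 : ε < 1 / 16 := by
    have := hεinf 16; push_cast at this; linarith
  have habs : |z - 1| < 1 / 4 := by
    have := hz 4; push_cast at this
    nlinarith [abs_nonneg (z - 1)]
  obtain ⟨h1, h2⟩ := abs_lt.mp habs
  have hzpos : 3 / 4 < z := by linarith
  have hzup : z < 5 / 4 := by linarith
  have hden : 1 / 2 < 2 * t - z := by rw [ht]; linarith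
  have hdenpos : 0 < 2 * t - z := by linarith
  have hdne : 2 * t - z ≠ 0 := ne_of_gt hdenpos
  have hzne : z ≠ 0 := by positivity
  refine ⟨⟨hdenpos, ?_⟩, hzne, ?_⟩
  · intro n
    have e1 : 1 / (2 * t - z) - 1 = (z + 4 * ε - 1) / (2 * t - z) := by
      rw [div_sub' hdne, ht]; congr 1; ring
    rw [e1, abs_div, abs_of_pos hdenpos, ← mul_div_assoc, div_lt_one hdenpos]
    have h4n := hz (4 * n); have h32n := hεinf (32 * n)
    push_cast at h4n h32n
    have htri : |z + 4 * ε - 1| ≤ |z - 1| + 4 * ε := by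
      calc |z + 4 * ε - 1| = |(z - 1) + 4 * ε| := by congr 1; ring
        _ ≤ |z - 1| + |4 * ε| := abs_add_le _ _
        _ = |z - 1| + 4 * ε := by
              rw [abs_of_pos (show (0:F) < 4 * ε by linarith)]
    have hnn : (0 : F) ≤ (n : F) := Nat.cast_nonneg n
    have a1 : (n : F) * |z - 1| < 1 / 4 := by nlinarith [abs_nonneg (z - 1)]
    have a2 : (n : F) * ε < 1 / 32 := by linarith
    calc (n : F) * |z + 4 * ε - 1| ≤ (n : F) * (|z - 1| + 4 * ε) :=
          mul_le_mul_of_nonneg_left htri hnn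
      _ = (n : F) * |z - 1| + 4 * ((n : F) * ε) := by ring
      _ < 1 / 4 + 4 * (1 / 32) := by linarith
      _ < 2 * t - z := by linarith
  · intro n
    have hzpos' : (0 : F) < z := by linarith
    have e2 : 2 * t - 1 / z - 1 = ((z - 1) - 4 * ε * z) / z := by
      rw [eq_div_iff hzne, ht]; field_simp; ring
    rw [e2, abs_div, abs_of_pos hzpos']
    have h4n := hz (4 * n); have h32n := hεinf (32 * n)
    push_cast at h4n h32n
    have htri : |(z - 1) - 4 * ε * z| ≤ |z - 1| + 4 * ε * z := by
      calc |(z - 1) - 4 * ε * z| ≤ |z - 1| + |4 * ε * z| := abs_sub (z - 1) (4 * ε * z)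
        _ = |z - 1| + 4 * ε * z := by rw [abs_of_pos (show (0:F) < 4 * ε * z by nlinarith)]
    have hnn : (0 : F) ≤ (n : F) := Nat.cast_nonneg n
    rw [← mul_div_assoc, div_lt_one hzpos']
    have a1 : (n : F) * |z - 1| < 1 / 4 := by nlinarith [abs_nonneg (z - 1)]
    have a2 : (n : F) * ε < 1 / 32 := by linarith
    have a3 : (0 : F) ≤ (n : F) * ε * (5 / 4 - z) :=
      mul_nonneg (mul_nonneg hnn hε.le) (by linarith)
    calc (n : F) * |(z - 1) - 4 * ε * z| ≤ (n : F) * (|z - 1| + 4 * ε * z) :=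
          mul_le_mul_of_nonneg_left htri hnn
      _ = (n : F) * |z - 1| + 5 * ((n : F) * ε) - 4 * ((n : F) * ε * (5 / 4 - z)) := by
          ring
      _ < z := by linarith
end

section
/- Let F be a linearly ordered field in which every nonnegative element is a square, and let M be a 2×2 matrix over F with determinant 1 whose trace t satisfies t ≥ 4 and is a big element of F (for every x ∈ F there exists n ∈ ℕ with x ≤ tⁿ). Then M has an eigenvalue λ ∈ F with λ ≥ 2 such that λ is a big element of F, and λ⁻¹ is also a root of the characteristic polynomial X² − t·X + 1 of M (the two eigenvalues are inverses of each other and of the same sign). -/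
/-- Over a linearly ordered field in which every nonnegative element is a square, a 2×2
matrix of determinant 1 whose trace is at least 4 and is a big element has an eigenvalue
`lam ≥ 2` which is a big element, and `lam⁻¹` is also a root of the characteristic
polynomial `X² − (trace M)·X + 1`. -/
theorem big_trace_big_eigenvalue
    {F : Type*} [Field F] [LinearOrder F] [IsStrictOrderedRing F]
    (hsq : ∀ x : F, 0 ≤ x → ∃ y : F, y ^ 2 = x)
    (M : Matrix (Fin 2) (Fin 2) F)
    (hdet : M.det = 1)
    (htr4 : 4 ≤ M.trace)
    (hbig : ∀ x : F, ∃ n : ℕ, x ≤ M.trace ^ n) :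
    ∃ lam : F, 2 ≤ lam ∧ (∀ x : F, ∃ n : ℕ, x ≤ lam ^ n) ∧
      (∃ v : Fin 2 → F, v ≠ 0 ∧ M.mulVec v = lam • v) ∧
      lam⁻¹ ^ 2 - M.trace * lam⁻¹ + 1 = 0 := by
  set t : F := M.trace with ht
  obtain ⟨y, hy⟩ := hsq (t ^ 2 - 4) (by nlinarith)
  set s : F := |y| with hs
  have hs0 : 0 ≤ s := abs_nonneg y
  have hs2 : s ^ 2 = t ^ 2 - 4 := by rw [hs, sq_abs]; exact hy
  set lam : F := (t + s) / 2 with hlam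
  have hlam2 : 2 ≤ lam := by rw [hlam]; linarith
  have hroot : lam ^ 2 - t * lam + 1 = 0 := by
    rw [hlam]; field_simp; nlinarith [hs2]
  have hlampos : 0 < lam := by linarith
  refine ⟨lam, hlam2, ?_, ?_, ?_⟩
  · intro x
    obtain ⟨n, hn⟩ := hbig x
    refine ⟨2 * n, hn.trans ?_⟩
    have htl : t ≤ lam ^ 2 := by nlinarith
    calc t ^ n ≤ (lam ^ 2) ^ n := pow_le_pow_left₀ (by linarith) htl n
      _ = lam ^ (2 * n) := by rw [← pow_mul]
  · have hdet0 : (M - lam • (1 : Matrix (Fin 2) (Fin 2) F)).det = 0 := by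
      have hfd : M.det = M 0 0 * M 1 1 - M 0 1 * M 1 0 := Matrix.det_fin_two M
      have hft : t = M 0 0 + M 1 1 := by
        rw [ht, Matrix.trace_fin_two]
      rw [Matrix.det_fin_two]
      simp only [Matrix.sub_apply, Matrix.smul_apply, Matrix.one_apply_eq,
        Matrix.one_apply_ne (by decide : (0 : Fin 2) ≠ 1),
        Matrix.one_apply_ne (by decide : (1 : Fin 2) ≠ 0), smul_eq_mul, mul_one, mul_zero]
      have : M 0 0 * M 1 1 - M 0 1 * M 1 0 = 1 := by rw [← hfd, hdet]
      nlinarith [hroot, hft]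
    obtain ⟨v, hv, hMv⟩ := (Matrix.exists_mulVec_eq_zero_iff).2 hdet0
    refine ⟨v, hv, ?_⟩
    have := hMv
    rw [Matrix.sub_mulVec, sub_eq_zero] at this
    rw [this, Matrix.smul_mulVec, Matrix.one_mulVec]
  · have hne : lam ≠ 0 := ne_of_gt hlampos
    have h2 : lam⁻¹ * lam = 1 := inv_mul_cancel₀ hne
    linear_combination lam⁻¹ ^ 2 * hroot + (t * lam⁻¹ - lam⁻¹ * lam - 1) * h2
end
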